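/- (Claim 4, forward direction, labeling part 3) Let P be a popular matching leaving exactly U uncovered, with D, V' as above. For every v' ∈ V' ∖ (D ∪ U) and x ∈ V ∖ V' such that v' prefers x to P(v'), the edge (v',x) is labeled (+,−) with respect to P, with the + at v'; in particular (v',x) does not block P. -/

import Mathlib

/-- A roommates instance: a simple graph together with, for each vertex,
a ranking of vertices (lower rank = more preferred), injective on neighbors. -/
structure Roommates (V : Type*) where
  G : SimpleGraph V
  rank : V → V → ℕ
  rank_inj : ∀ u a b, G.Adj u a → G.Adj u b → rank u a = rank u b → a = b

variable {V : Type*}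

/-- `M` encodes a matching: `M u = some v` means `u` is matched to `v`. -/
def IsMatching (R : Roommates V) (M : V → Option V) : Prop :=
  ∀ u v, M u = some v → R.G.Adj u v ∧ M v = some u

/-- Vertex `v` prefers matching `M` to matching `M'`. -/
def Prefers (R : Roommates V) (M M' : V → Option V) (v : V) : Prop :=
  (∃ w, M v = some w ∧ M' v = none) ∨
  (∃ w w', M v = some w ∧ M' v = some w' ∧ R.rank v w < R.rank v w')

/-- `M` is popular: it never loses a head-to-head election. -/
def Popular [Fintype V] (R : Roommates V) (M : V → Option V) : Prop :=
  ∀ M', IsMatching R M' →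
    {v | Prefers R M' M v}.ncard ≤ {v | Prefers R M M' v}.ncard

/-- Edge `(u,v)` blocks `M`: each endpoint is unmatched or prefers the other
endpoint to its partner. -/
def Blocks (R : Roommates V) (M : V → Option V) (u v : V) : Prop :=
  R.G.Adj u v ∧ M u ≠ some v ∧
  (∀ w, M u = some w → R.rank u v < R.rank u w) ∧
  (∀ w, M v = some w → R.rank v u < R.rank v w)

def IsStable (R : Roommates V) (M : V → Option V) : Prop :=
  ∀ u v, ¬ Blocks R M u v

/-- `u` votes `+` for `v` against its situation in `M`
(true when `u` is unmatched or prefers `v` to its `M`-partner). -/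
def VotePlus (R : Roommates V) (M : V → Option V) (u v : V) : Prop :=
  ∀ w, M u = some w → R.rank u v < R.rank u w

/-- Non-matching edge of `G_M`, i.e. not labeled `(−,−)`. -/
def NonMatchEdge (R : Roommates V) (M : V → Option V) (u v : V) : Prop :=
  R.G.Adj u v ∧ M u ≠ some v ∧ (VotePlus R M u v ∨ VotePlus R M v u)

/-- `AltList A M b l`: the list of vertices `l` forms an alternating sequence,
whose first edge is a matching edge if `b = true` and an allowed (`A`)
non-matching edge if `b = false`. -/
def AltList (A : V → V → Prop) (M : V → Option V) : Bool → List V → Prop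
  | _, [] => True
  | _, [_] => True
  | true, u :: v :: rest => M u = some v ∧ AltList A M false (v :: rest)
  | false, u :: v :: rest => A u v ∧ AltList A M true (v :: rest)

/-- A matching of the subgraph induced on `W`. -/
def IsMatchingOn (R : Roommates V) (W : Set V) (M : V → Option V) : Prop :=
  IsMatching R M ∧ ∀ u v, M u = some v → u ∈ W ∧ v ∈ W

/-- Popularity within the subgraph induced on `W`. -/
def PopularOn (R : Roommates V) (W : Set V) (M : V → Option V) : Prop :=
  ∀ M', IsMatchingOn R W M' →
    {v | v ∈ W ∧ Prefers R M' M v}.ncard ≤ {v | v ∈ W ∧ Prefers R M M' v}.ncard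

/-- Stability within the subgraph induced on `W`. -/
def StableOn (R : Roommates V) (W : Set V) (M : V → Option V) : Prop :=
  ∀ u v, u ∈ W → v ∈ W → ¬ Blocks R M u v

/-!
Let `w = P(x)`. If `x` preferred `v'` to `w`, the edge `(x, v')` would block `P`. As `x ∉ V'`,
the vertex `w` lies neither in `Z` nor in `U`, so it has a neighbour `u ∈ U`. Switching `P` along
the alternating path `u - w = x - v' = P(v')` makes `u`, `x` and `v'` better off and only `w` and
`P(v')` worse off, so `P` would lose the election against the switched matching.
-/

namespace IsMatching

variable {R : Roommates V} {M : V → Option V}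

theorem adj (hM : IsMatching R M) {a b : V} (h : M a = some b) : R.G.Adj a b :=
  (hM a b h).1

theorem symm (hM : IsMatching R M) {a b : V} (h : M a = some b) : M b = some a :=
  (hM a b h).2

end IsMatching

theorem ne_of_eq_none_of_eq_some {M : V → Option V} {a b c : V} (ha : M a = none)
    (hb : M b = some c) : a ≠ b := by
  rintro rfl
  simp [ha] at hb

theorem blocks_of_rank_lt {R : Roommates V} {M : V → Option V} {x y w p : V}
    (hxy : R.G.Adj x y) (hxw : M x = some w) (hyp : M y = some p)
    (hx : R.rank x y < R.rank x w) (hy : R.rank y x < R.rank y p) : Blocks R M x y := by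
  refine ⟨hxy, fun h => ?_, fun _ h => ?_, fun _ h => ?_⟩
  · cases hxw.symm.trans h
    exact lt_irrefl _ hx
  · cases hxw.symm.trans h
    exact hx
  · cases hyp.symm.trans h
    exact hy

structure IsAltPath (R : Roommates V) (M : V → Option V) (u w x y p : V) : Prop where
  unmatched : M u = none
  adj_uw : R.G.Adj u w
  match_wx : M w = some x
  adj_xy : R.G.Adj x y
  match_yp : M y = some p
  ne_xp : x ≠ p

/-- The symmetric difference of `M` with the path `u - w = x - y = p`. -/
def switchPath [DecidableEq V] (M : V → Option V) (u w x y p : V) : V → Option V := fun a =>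
  if a = u then some w else if a = w then some u else
  if a = x then some y else if a = y then some x else
  if a = p then none else M a

namespace IsAltPath

variable {R : Roommates V} {M : V → Option V} {u w x y p : V}

theorem pairwise_ne (h : IsAltPath R M u w x y p) (hM : IsMatching R M) :
    u ≠ w ∧ u ≠ x ∧ u ≠ y ∧ u ≠ p ∧ w ≠ x ∧ w ≠ y ∧ w ≠ p ∧ x ≠ y ∧ x ≠ p ∧ y ≠ p := by
  have hxw := hM.symm h.match_wx
  have hpy := hM.symm h.match_yp
  refine ⟨ne_of_eq_none_of_eq_some h.unmatched h.match_wx,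
    ne_of_eq_none_of_eq_some h.unmatched hxw, ne_of_eq_none_of_eq_some h.unmatched h.match_yp,
    ne_of_eq_none_of_eq_some h.unmatched hpy, (hM.adj h.match_wx).ne, ?_, ?_, h.adj_xy.ne,
    h.ne_xp, (hM.adj h.match_yp).ne⟩
  · rintro rfl
    exact h.ne_xp (Option.some_injective _ (h.match_wx.symm.trans h.match_yp))
  · rintro rfl
    exact h.adj_xy.ne (Option.some_injective _ (h.match_wx.symm.trans hpy))

variable [DecidableEq V]

theorem isMatching_switchPath (h : IsAltPath R M u w x y p) (hM : IsMatching R M) :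
    IsMatching R (switchPath M u w x y p) := by
  obtain ⟨huw, hux, huy, -, hwx, hwy, -, hxy, -, -⟩ := h.pairwise_ne hM
  have hMw := h.match_wx
  have hMy := h.match_yp
  have hMx := hM.symm hMw
  have hMp := hM.symm hMy
  intro a b hab
  unfold switchPath at hab ⊢
  split_ifs at hab with hau haw hax hay hap
  · cases hab; subst hau
    simp [h.adj_uw, huw.symm]
  · cases hab; subst haw
    simp [h.adj_uw.symm]
  · cases hab; subst hax
    simp [h.adj_xy, hxy.symm, huy.symm, hwy.symm]
  · cases hab; subst hay
    simp [h.adj_xy.symm, hux.symm, hwx.symm]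
  · have hba := hM.symm hab
    have hbu : b ≠ u := (ne_of_eq_none_of_eq_some h.unmatched hba).symm
    have hbw : b ≠ w := by rintro rfl; simp_all
    have hbx : b ≠ x := by rintro rfl; simp_all
    have hby : b ≠ y := by rintro rfl; simp_all
    have hbp : b ≠ p := by rintro rfl; simp_all
    simp [hM.adj hab, hba, hbu, hbw, hbx, hby, hbp]

theorem subset_prefers_switchPath (h : IsAltPath R M u w x y p) (hM : IsMatching R M)
    (hx : R.rank x y < R.rank x w) (hy : R.rank y x < R.rank y p) :
    {u, x, y} ⊆ {a | Prefers R (switchPath M u w x y p) M a} := by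
  obtain ⟨-, hux, huy, -, hwx, hwy, -, hxy, -, -⟩ := h.pairwise_ne hM
  rintro a (rfl | rfl | rfl)
  · exact Or.inl ⟨w, by simp [switchPath], h.unmatched⟩
  · exact Or.inr ⟨y, w, by simp [switchPath, hux.symm, hwx.symm], hM.symm h.match_wx, hx⟩
  · exact Or.inr ⟨x, p, by simp [switchPath, huy.symm, hwy.symm, hxy.symm], h.match_yp, hy⟩

theorem prefers_subset_of_switchPath (h : IsAltPath R M u w x y p) (hM : IsMatching R M)
    (hx : R.rank x y < R.rank x w) (hy : R.rank y x < R.rank y p) :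
    {a | Prefers R M (switchPath M u w x y p) a} ⊆ {w, p} := by
  intro a ha
  simp only [Set.mem_ofPred_eq, Prefers, switchPath] at ha
  split_ifs at ha with hau haw hax hay hap
  · simp [hau, h.unmatched] at ha
  · exact Or.inl haw
  · simp [hax, hM.symm h.match_wx] at ha
    omega
  · simp [hay, h.match_yp] at ha
    omega
  · exact Or.inr hap
  · rcases ha with ⟨c, hc, hc'⟩ | ⟨c, d, hc, hd, hcd⟩
    · simp [hc] at hc'
    · cases hc.symm.trans hd
      exact absurd hcd (lt_irrefl _)

end IsAltPath

theorem Popular.not_blocks_of_adj_unmatched [Fintype V] {R : Roommates V} {M : V → Option V}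
    {u w x y p : V} (hpop : Popular R M) (hM : IsMatching R M) (hu : M u = none)
    (huw : R.G.Adj u w) (hwx : M w = some x) (hyp : M y = some p) : ¬ Blocks R M x y := by
  classical
  rintro ⟨hxy, hne, hx_pref, hy_pref⟩
  have hpath : IsAltPath R M u w x y p :=
    ⟨hu, huw, hwx, hxy, hyp, by rintro rfl; exact hne (hM.symm hyp)⟩
  have hx := hx_pref w (hM.symm hwx)
  have hy := hy_pref p hyp
  obtain ⟨-, hux, huy, -, -, -, -, hx_ne_y, -, -⟩ := hpath.pairwise_ne hM
  have hwin : 3 ≤ {a | Prefers R (switchPath M u w x y p) M a}.ncard := by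
    refine le_of_eq_of_le ?_ (Set.ncard_le_ncard (hpath.subset_prefers_switchPath hM hx hy))
    exact (Set.ncard_eq_three.mpr ⟨u, x, y, hux, huy, hx_ne_y, rfl⟩).symm
  have hlose : {a | Prefers R M (switchPath M u w x y p) a}.ncard ≤ 2 :=
    (Set.ncard_le_ncard (hpath.prefers_subset_of_switchPath hM hx hy)).trans
      ((Set.ncard_insert_le w {p}).trans_eq (by simp))
  have := hpop _ (hpath.isMatching_switchPath hM)
  omega

theorem claim4_label3_general {V : Type*} [Fintype V] (R : Roommates V)
    (P : V → Option V) (hP : IsMatching R P) (hpop : Popular R P)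
    (U : Set V) (hU : ∀ v, P v = none ↔ v ∈ U)
    (Z : Set V) (hZ : Z = {w | w ∉ U ∧ ∀ x ∈ U, ¬ R.G.Adj w x})
    (PZ : V → Option V)
    (hsub : ∀ u v, PZ u = some v → P u = some v)
    (hcov : ∀ z ∈ Z, ∃ y, PZ z = some y)
    (V' : Set V) (hV' : V' = Z ∪ {y | ∃ z ∈ Z, PZ z = some y} ∪ U)
    (D : Set V) :
    ∀ v', v' ∈ V' → v' ∉ D → v' ∉ U → ∀ x, x ∉ V' → R.G.Adj v' x →
      (∃ w, P v' = some w ∧ R.rank v' x < R.rank v' w) →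
      (∃ w, P x = some w ∧ R.rank x w < R.rank x v') ∧ ¬ Blocks R P v' x := by
  rintro v' - - - x hxV' hadj ⟨p, hPv', hpref⟩
  obtain ⟨w, hPxw⟩ : ∃ w, P x = some w :=
    Option.ne_none_iff_exists'.mp fun hx => hxV' (hV' ▸ Or.inr ((hU x).mp hx))
  have hPwx := hP.symm hPxw
  have hwZ : w ∉ Z := fun hwZ => by
    obtain ⟨y, hy⟩ := hcov w hwZ
    cases (hsub w y hy).symm.trans hPwx
    exact hxV' (hV' ▸ Or.inl (Or.inr ⟨w, hwZ, hy⟩))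
  have hwU : w ∉ U := fun hwU => by simp [(hU w).mpr hwU] at hPwx
  obtain ⟨u, huU, hwu⟩ : ∃ u ∈ U, R.G.Adj w u := by simpa [hZ, hwU] using hwZ
  have hx_not_pref : ¬ R.rank x v' < R.rank x w := fun hx =>
    hpop.not_blocks_of_adj_unmatched hP ((hU u).mpr huU) hwu.symm hPwx hPv'
      (blocks_of_rank_lt hadj.symm hPxw hPv' hx hpref)
  have hwv' : w ≠ v' := by
    rintro rfl
    cases hPwx.symm.trans hPv'
    exact lt_irrefl _ hpref
  have hrank : R.rank x w < R.rank x v' :=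
    (not_lt.mp hx_not_pref).lt_of_ne fun h => hwv' (R.rank_inj x w v' (hP.adj hPxw) hadj.symm h)
  exact ⟨⟨w, hPxw, hrank⟩, fun hblock => (hblock.2.2.2 w hPxw).asymm hrank⟩

/-- Claim 4, forward direction, labeling part 3: for every
`v' ∈ V' ∖ (D ∪ U)` and `x ∈ V ∖ V'` such that `v'` prefers `x` to its
`P`-partner, the edge `(v', x)` is labeled `(+,−)` with the `+` at `v'`;
in particular it does not block `P`. -/
theorem claim4_label3 {V : Type*} [Fintype V] (R : Roommates V)
    (P : V → Option V) (hP : IsMatching R P) (hpop : Popular R P)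
    (U : Set V) (hU : ∀ v, P v = none ↔ v ∈ U)
    (Z : Set V) (hZ : Z = {w | w ∉ U ∧ ∀ x ∈ U, ¬ R.G.Adj w x})
    (PZ : V → Option V) (hPZ : IsMatching R PZ)
    (hsub : ∀ u v, PZ u = some v → P u = some v)
    (hcov : ∀ z ∈ Z, ∃ y, PZ z = some y)
    (hmeet : ∀ u v, PZ u = some v → u ∈ Z ∨ v ∈ Z)
    (V' : Set V) (hV' : V' = Z ∪ {y | ∃ z ∈ Z, PZ z = some y} ∪ U)
    (D : Set V)
    (hD : D = {z | ∃ (l : List V) (x y : V) (t : List V),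
      l = x :: y :: t ∧ x ∈ V' ∧ y ∈ V' ∧ Blocks R PZ x y ∧
      AltList (fun a b => a ∈ V' ∧ b ∈ V' ∧ NonMatchEdge R PZ a b) PZ false l ∧
      l.Nodup ∧ Odd l.length ∧ l.getLast? = some z}) :
    ∀ v', v' ∈ V' → v' ∉ D → v' ∉ U → ∀ x, x ∉ V' → R.G.Adj v' x →
      (∃ w, P v' = some w ∧ R.rank v' x < R.rank v' w) →
      (∃ w, P x = some w ∧ R.rank x w < R.rank x v') ∧ ¬ Blocks R P v' x :=
  claim4_label3_general R P hP hpop U hU Z hZ PZ hsub hcov V' hV' D
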